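/- arXiv:0802.2574 — 9 statements merged into one kernel-verified Lean document; each statement's English description precedes it below -/
import Mathlib

section
/- Let β ⊆ α₁ ∩ α₂. Then for any set function h, J(h; α₁, α₂, α₃, α₄) = J(h; α₁, α₂, α₃∪β, α₄∪β) + h(β | α₃∪α₄), where h(β|δ) := h(β∪δ) − h(δ). -/
/-! Every term of `IngJ` that involves the third or fourth argument also contains the first or
the second one, which absorbs `β`; the only exception is `h (α₃ ∪ α₄)`, and adding `β` there
costs exactly `h (β | α₃ ∪ α₄)`. -/

def IngJ {N : Type*} [DecidableEq N] (h : Finset N → ℝ) (a b c d : Finset N) : ℝ :=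
  h (a ∪ b) + h (a ∪ c) + h (a ∪ d) + h (b ∪ c) + h (b ∪ d)
    - h a - h b - h (c ∪ d) - h (a ∪ b ∪ c) - h (a ∪ b ∪ d)

theorem Finset.union_union_eq_of_subset {α : Type*} [DecidableEq α] {s u : Finset α}
    (t : Finset α) (hu : u ⊆ s) : s ∪ (t ∪ u) = s ∪ t := by
  rw [← Finset.union_assoc, Finset.union_eq_left.mpr (hu.trans Finset.subset_union_left)]

theorem IngJ_union_of_subset_inter {N : Type*} [DecidableEq N] (h : Finset N → ℝ)
    {a1 a2 b : Finset N} (c d : Finset N) (hb : b ⊆ a1 ∩ a2) :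
    IngJ h a1 a2 (c ∪ b) (d ∪ b) = IngJ h a1 a2 c d + h (c ∪ d) - h (c ∪ d ∪ b) := by
  have hb1 : b ⊆ a1 := hb.trans Finset.inter_subset_left
  have hb2 : b ⊆ a2 := hb.trans Finset.inter_subset_right
  have hb12 : b ⊆ a1 ∪ a2 := hb1.trans Finset.subset_union_left
  simp only [IngJ, Finset.union_union_eq_of_subset _ hb1, Finset.union_union_eq_of_subset _ hb2,
    Finset.union_union_eq_of_subset _ hb12, ← Finset.union_union_distrib_right]
  ring

theorem ingleton_add_to_34_general {N : Type*} [DecidableEq N]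
    (h : Finset N → ℝ) (a1 a2 a3 a4 b : Finset N)
    (hb : b ⊆ a1 ∩ a2) :
    IngJ h a1 a2 a3 a4 = IngJ h a1 a2 (a3 ∪ b) (a4 ∪ b) + (h (b ∪ (a3 ∪ a4)) - h (a3 ∪ a4)) := by
  rw [IngJ_union_of_subset_inter h a3 a4 hb, Finset.union_comm b]
  ring

theorem ingleton_add_to_34 {N : Type*} [DecidableEq N] [Fintype N]
    (h : Finset N → ℝ) (h0 : h ∅ = 0) (a1 a2 a3 a4 b : Finset N)
    (hb : b ⊆ a1 ∩ a2) :
    IngJ h a1 a2 a3 a4 = IngJ h a1 a2 (a3 ∪ b) (a4 ∪ b) + (h (b ∪ (a3 ∪ a4)) - h (a3 ∪ a4)) :=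
  ingleton_add_to_34_general h a1 a2 a3 a4 b hb
end

section
/- Let β ⊆ α₁ ∩ α₃. Then for any set function h, J(h; α₁, α₂, α₃, α₄) = J(h; α₁, α₂∪β, α₃, α₄∪β) + I_h(β; α₄ | α₂), where I_h(β;α₄|α₂) := h(β∪α₂) + h(α₄∪α₂) − h(α₂) − h(β∪α₄∪α₂). -/
theorem IngJ_union_union_of_subset {N : Type*} [DecidableEq N] (h : Finset N → ℝ)
    {a1 a2 a3 a4 b : Finset N} (hb1 : b ⊆ a1) (hb3 : b ⊆ a3) :
    IngJ h a1 (a2 ∪ b) a3 (a4 ∪ b)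
      = IngJ h a1 a2 a3 a4 + h (a2 ∪ a4 ∪ b) - h (a2 ∪ a4) - h (a2 ∪ b) + h a2 := by
  have e12 : a1 ∪ (a2 ∪ b) = a1 ∪ a2 := by grind
  have e14 : a1 ∪ (a4 ∪ b) = a1 ∪ a4 := by grind
  have e23 : a2 ∪ b ∪ a3 = a2 ∪ a3 := by grind
  have e24 : a2 ∪ b ∪ (a4 ∪ b) = a2 ∪ a4 ∪ b := by grind
  have e34 : a3 ∪ (a4 ∪ b) = a3 ∪ a4 := by grind
  have e124 : a1 ∪ a2 ∪ (a4 ∪ b) = a1 ∪ a2 ∪ a4 := by grind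
  simp only [IngJ, e12, e14, e23, e24, e34, e124]
  ring

theorem ingleton_add_to_24_general {N : Type*} [DecidableEq N]
    (h : Finset N → ℝ) (a1 a2 a3 a4 b : Finset N)
    (hb : b ⊆ a1 ∩ a3) :
    IngJ h a1 a2 a3 a4 = IngJ h a1 (a2 ∪ b) a3 (a4 ∪ b)
      + (h (b ∪ a2) + h (a4 ∪ a2) - h a2 - h (b ∪ a4 ∪ a2)) := by
  obtain ⟨hb1, hb3⟩ := Finset.subset_inter_iff.1 hb
  have hunion : b ∪ a4 ∪ a2 = a2 ∪ a4 ∪ b := by grind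
  rw [IngJ_union_union_of_subset h hb1 hb3, hunion, Finset.union_comm b, Finset.union_comm a4]
  ring

theorem ingleton_add_to_24 {N : Type*} [DecidableEq N] [Fintype N]
    (h : Finset N → ℝ) (h0 : h ∅ = 0) (a1 a2 a3 a4 b : Finset N)
    (hb : b ⊆ a1 ∩ a3) :
    IngJ h a1 a2 a3 a4 = IngJ h a1 (a2 ∪ b) a3 (a4 ∪ b)
      + (h (b ∪ a2) + h (a4 ∪ a2) - h a2 - h (b ∪ a4 ∪ a2)) :=
  ingleton_add_to_24_general h a1 a2 a3 a4 b hb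
end

section
/- Let β ⊆ α₃ ∩ α₄. Then for any set function h, J(h; α₁, α₂, α₃, α₄) = J(h; α₁∪β, α₂∪β, α₃, α₄) + I_h(β; α₂ | α₁) + h(β | α₂), where I_h(β;α₂|α₁) := h(β∪α₁) + h(α₂∪α₁) − h(α₁) − h(β∪α₂∪α₁) and h(β|α₂) := h(β∪α₂) − h(α₂). -/
namespace Finset

variable {N : Type*} [DecidableEq N]

theorem union_union_eq_of_subset_s7 {a b c : Finset N} (hbc : b ⊆ c) : a ∪ b ∪ c = a ∪ c := by
  rw [union_assoc, union_eq_right.2 hbc]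

theorem union_union_union_eq_of_subset {a a' b c : Finset N} (hbc : b ⊆ c) :
    a ∪ b ∪ (a' ∪ b) ∪ c = a ∪ a' ∪ c := by
  rw [← union_union_eq_of_subset_s7 (a := a ∪ a') hbc]
  ext x
  simp only [mem_union]
  tauto

end Finset

open Finset in
theorem IngJ_union_of_subset {N : Type*} [DecidableEq N] (h : Finset N → ℝ)
    {a a' b c d : Finset N} (hbc : b ⊆ c) (hbd : b ⊆ d) :
    IngJ h (a ∪ b) (a' ∪ b) c d = IngJ h a a' c d
      + (h (a ∪ b ∪ (a' ∪ b)) - h (a ∪ a')) - (h (a ∪ b) - h a) - (h (a' ∪ b) - h a') := by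
  simp only [IngJ, union_union_eq_of_subset_s7 hbc, union_union_eq_of_subset_s7 hbd,
    union_union_union_eq_of_subset hbc, union_union_union_eq_of_subset hbd]
  ring

theorem ingleton_add_to_12_general {N : Type*} [DecidableEq N]
    (h : Finset N → ℝ) (a1 a2 a3 a4 b : Finset N)
    (hb : b ⊆ a3 ∩ a4) :
    IngJ h a1 a2 a3 a4 = IngJ h (a1 ∪ b) (a2 ∪ b) a3 a4
      + (h (b ∪ a1) + h (a2 ∪ a1) - h a1 - h (b ∪ a2 ∪ a1))
      + (h (b ∪ a2) - h a2) := by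
  have hb3 : b ⊆ a3 := hb.trans Finset.inter_subset_left
  have hb4 : b ⊆ a4 := hb.trans Finset.inter_subset_right
  have hunion : a1 ∪ b ∪ (a2 ∪ b) = b ∪ a2 ∪ a1 := by
    ext x
    simp only [Finset.mem_union]
    tauto
  rw [IngJ_union_of_subset h hb3 hb4, hunion, Finset.union_comm b a1, Finset.union_comm a2 a1,
    Finset.union_comm b a2]
  ring

theorem ingleton_add_to_12 {N : Type*} [DecidableEq N] [Fintype N]
    (h : Finset N → ℝ) (h0 : h ∅ = 0) (a1 a2 a3 a4 b : Finset N)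
    (hb : b ⊆ a3 ∩ a4) :
    IngJ h a1 a2 a3 a4 = IngJ h (a1 ∪ b) (a2 ∪ b) a3 a4
      + (h (b ∪ a1) + h (a2 ∪ a1) - h a1 - h (b ∪ a2 ∪ a1))
      + (h (b ∪ a2) - h a2) :=
  ingleton_add_to_12_general h a1 a2 a3 a4 b hb
end

section
/- Let a ⊆ α₁, b ⊆ α₂, c ⊆ α₃. Then for any set function h, J(h; α₁, α₂, α₃, a∪b∪c) = I_h(α₂; c | α₁∪b) + I_h(α₃; b | α₁) + I_h(α₃; a | α₂∪c) + I_h(α₁; α₂ | α₃∪a∪b) + h(c | α₂). -/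
theorem ingleton_fourth_in_union_general {N : Type*} [DecidableEq N]
    (h : Finset N → ℝ) (a1 a2 a3 a b c : Finset N)
    (ha : a ⊆ a1) (hb : b ⊆ a2) (hc : c ⊆ a3) :
    IngJ h a1 a2 a3 (a ∪ b ∪ c) =
      (h (a2 ∪ (a1 ∪ b)) + h (c ∪ (a1 ∪ b)) - h (a1 ∪ b) - h (a2 ∪ c ∪ (a1 ∪ b)))
      + (h (a3 ∪ a1) + h (b ∪ a1) - h a1 - h (a3 ∪ b ∪ a1))
      + (h (a3 ∪ (a2 ∪ c)) + h (a ∪ (a2 ∪ c)) - h (a2 ∪ c) - h (a3 ∪ a ∪ (a2 ∪ c)))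
      + (h (a1 ∪ (a3 ∪ a ∪ b)) + h (a2 ∪ (a3 ∪ a ∪ b)) - h (a3 ∪ a ∪ b) - h (a1 ∪ a2 ∪ (a3 ∪ a ∪ b)))
      + (h (c ∪ a2) - h a2) := by
  -- With `a1` written as `a ∪ a1` (and likewise `a2`, `a3`), every set is a union of the six
  -- letters, so normalising unions modulo associativity, commutativity and idempotence
  -- identifies equal sets syntactically and the identity becomes a cancellation of terms.
  rw [← Finset.union_eq_right.mpr ha, ← Finset.union_eq_right.mpr hb,
    ← Finset.union_eq_right.mpr hc]
  simp only [IngJ, Finset.union_comm, Finset.union_left_comm, Finset.union_self,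
    Finset.union_left_idem]
  ring

theorem ingleton_fourth_in_union {N : Type*} [DecidableEq N] [Fintype N]
    (h : Finset N → ℝ) (h0 : h ∅ = 0) (a1 a2 a3 a b c : Finset N)
    (ha : a ⊆ a1) (hb : b ⊆ a2) (hc : c ⊆ a3) :
    IngJ h a1 a2 a3 (a ∪ b ∪ c) =
      (h (a2 ∪ (a1 ∪ b)) + h (c ∪ (a1 ∪ b)) - h (a1 ∪ b) - h (a2 ∪ c ∪ (a1 ∪ b)))
      + (h (a3 ∪ a1) + h (b ∪ a1) - h a1 - h (a3 ∪ b ∪ a1))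
      + (h (a3 ∪ (a2 ∪ c)) + h (a ∪ (a2 ∪ c)) - h (a2 ∪ c) - h (a3 ∪ a ∪ (a2 ∪ c)))
      + (h (a1 ∪ (a3 ∪ a ∪ b)) + h (a2 ∪ (a3 ∪ a ∪ b)) - h (a3 ∪ a ∪ b) - h (a1 ∪ a2 ∪ (a3 ∪ a ∪ b)))
      + (h (c ∪ a2) - h a2) :=
  ingleton_fourth_in_union_general h a1 a2 a3 a b c ha hb hc
end

section
/- If h is a polymatroid (normalized, monotone, submodular set function) and one of the four subsets α₁, α₂, α₃, α₄ is contained in the union of the other three, then the Ingleton inequality holds: J(h; α₁, α₂, α₃, α₄) ≥ 0. -/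
open Finset

namespace IngJ

variable {N : Type*} [DecidableEq N] (h : Finset N → ℝ) (a b c d : Finset N)

theorem swap_left : IngJ h a b c d = IngJ h b a c d := by
  simp only [IngJ, union_comm b a]
  ring

theorem swap_right : IngJ h a b c d = IngJ h a b d c := by
  simp only [IngJ, union_comm d c]
  ring

end IngJ

section Polymatroid

variable {N : Type*} [DecidableEq N] {h : Finset N → ℝ} (hmono : Monotone h)
  (hsub : ∀ s t : Finset N, h (s ∪ t) + h (s ∩ t) ≤ h s + h t)
include hmono hsub

theorem add_le_add_of_subset_union_of_subset_inter {s t u v : Finset N} (hu : u ⊆ s ∪ t)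
    (hv : v ⊆ s ∩ t) : h u + h v ≤ h s + h t := by
  linarith [hsub s t, hmono hu, hmono hv]

theorem sub_le_IngJ_left (a b c d : Finset N) :
    h (a ∩ c ∪ b ∪ d) - h (a ∪ b ∪ d) ≤ IngJ h a b c d := by
  have h₁ : h (a ∩ c ∪ b ∪ d) + h b ≤ h (b ∪ a ∩ c) + h (b ∪ d) :=
    add_le_add_of_subset_union_of_subset_inter hmono hsub (by grind) (by grind)
  have h₂ : h (a ∪ b ∪ c) + h (b ∪ a ∩ c) ≤ h (b ∪ c) + h (a ∪ b ∪ c ∩ d) :=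
    add_le_add_of_subset_union_of_subset_inter hmono hsub (by grind) (by grind)
  have h₃ : h (a ∪ b ∪ c ∩ d) + h (a ∪ b ∩ c) ≤ h (a ∪ b) + h (a ∪ c ∩ (b ∪ d)) :=
    add_le_add_of_subset_union_of_subset_inter hmono hsub (by grind) (by grind)
  have h₄ : h (c ∪ d) + h (a ∪ c ∩ (b ∪ d)) ≤ h (a ∪ c) + h (a ∪ b ∩ c ∪ d) :=
    add_le_add_of_subset_union_of_subset_inter hmono hsub (by grind) (by grind)
  have h₅ : h (a ∪ b ∩ c ∪ d) + h a ≤ h (a ∪ b ∩ c) + h (a ∪ d) :=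
    add_le_add_of_subset_union_of_subset_inter hmono hsub (by grind) (by grind)
  unfold IngJ
  linarith

theorem sub_le_IngJ_right (a b c d : Finset N) :
    h (c ∩ (a ∪ b) ∪ d) - h (c ∪ d) ≤ IngJ h a b c d := by
  have h₁ : h (a ∪ b ∩ c ∪ d) + h a ≤ h (a ∪ b ∩ c) + h (a ∪ d) :=
    add_le_add_of_subset_union_of_subset_inter hmono hsub (by grind) (by grind)
  have h₂ : h (a ∪ b ∩ c) ≤ h (a ∪ c) := hmono (by grind)
  have h₃ : h (a ∩ c ∪ b ∪ d) + h b ≤ h (b ∪ a ∩ c) + h (b ∪ d) :=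
    add_le_add_of_subset_union_of_subset_inter hmono hsub (by grind) (by grind)
  have h₄ : h (a ∪ b ∪ c) + h (b ∪ a ∩ c) ≤ h (a ∪ b) + h (b ∪ c) :=
    add_le_add_of_subset_union_of_subset_inter hmono hsub (by grind) (by grind)
  have h₅ : h (a ∪ b ∪ d) + h (c ∩ (a ∪ b) ∪ d) ≤ h (a ∪ b ∩ c ∪ d) + h (a ∩ c ∪ b ∪ d) :=
    add_le_add_of_subset_union_of_subset_inter hmono hsub (by grind) (by grind)
  unfold IngJ
  linarith

theorem IngJ_nonneg_of_subset_left {a b c d : Finset N} (hc : a ⊆ b ∪ c ∪ d) :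
    0 ≤ IngJ h a b c d := by
  have hunion : a ∩ c ∪ b ∪ d = a ∪ b ∪ d := by grind
  have := sub_le_IngJ_left hmono hsub a b c d
  rwa [hunion, sub_self] at this

theorem IngJ_nonneg_of_subset_right {a b c d : Finset N} (hc : c ⊆ a ∪ b ∪ d) :
    0 ≤ IngJ h a b c d := by
  have hunion : c ∩ (a ∪ b) ∪ d = c ∪ d := by grind
  have := sub_le_IngJ_right hmono hsub a b c d
  rwa [hunion, sub_self] at this

end Polymatroid

theorem ingleton_of_polymatroid_containment_general {N : Type*} [DecidableEq N]
    (h : Finset N → ℝ)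
    (hmono : ∀ ⦃s t : Finset N⦄, s ⊆ t → h s ≤ h t)
    (hsub : ∀ s t : Finset N, h (s ∪ t) + h (s ∩ t) ≤ h s + h t)
    (a1 a2 a3 a4 : Finset N)
    (hcon : a1 ⊆ a2 ∪ a3 ∪ a4 ∨ a2 ⊆ a1 ∪ a3 ∪ a4 ∨ a3 ⊆ a1 ∪ a2 ∪ a4 ∨ a4 ⊆ a1 ∪ a2 ∪ a3) :
    0 ≤ IngJ h a1 a2 a3 a4 := by
  rcases hcon with hc | hc | hc | hc
  · exact IngJ_nonneg_of_subset_left hmono hsub hc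
  · rw [IngJ.swap_left]
    exact IngJ_nonneg_of_subset_left hmono hsub hc
  · exact IngJ_nonneg_of_subset_right hmono hsub hc
  · rw [IngJ.swap_right]
    exact IngJ_nonneg_of_subset_right hmono hsub hc

theorem ingleton_of_polymatroid_containment {N : Type*} [DecidableEq N] [Fintype N]
    (h : Finset N → ℝ) (h0 : h ∅ = 0)
    (hmono : ∀ ⦃s t : Finset N⦄, s ⊆ t → h s ≤ h t)
    (hsub : ∀ s t : Finset N, h (s ∪ t) + h (s ∩ t) ≤ h s + h t)
    (a1 a2 a3 a4 : Finset N)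
    (hcon : a1 ⊆ a2 ∪ a3 ∪ a4 ∨ a2 ⊆ a1 ∪ a3 ∪ a4 ∨ a3 ⊆ a1 ∪ a2 ∪ a4 ∨ a4 ⊆ a1 ∪ a2 ∪ a3) :
    0 ≤ IngJ h a1 a2 a3 a4 :=
  ingleton_of_polymatroid_containment_general h hmono hsub a1 a2 a3 a4 hcon
end

section
/- For any polymatroid h and any subsets α₁, α₂, α₃, α₄ of N, defining δᵢ := αᵢ \ ⋃_{j≠i} αⱼ and β := ⋃ᵢ (αᵢ \ δᵢ), we have J(h; α₁, α₂, α₃, α₄) ≥ J(h; δ₁∪β, δ₂∪β, δ₃∪β, δ₄∪β). -/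
/-!
Element by element, `δᵢ ∪ β` is `αᵢ` together with the pairwise intersections of the other three
sets, and every union of two or three of the reduced sets is the corresponding union of the `αⱼ`
with the intersection of the remaining ones adjoined. The difference of the two Ingleton terms is
then a sum of marginal gains. By submodularity and monotonicity, the gain from adjoining a set
decreases as the base grows, so building `δ₁ ∪ β` from `α₁` and `δ₂ ∪ β` from `α₂` one
intersection at a time gains at least as much as adjoining the same intersections to the larger
pair unions `αᵢ ∪ αⱼ`.
-/

theorem marginal_gain_antitone {α : Type*} [Lattice α] {h : α → ℝ} (hmono : Monotone h)
    (hsub : ∀ s t, h (s ⊔ t) + h (s ⊓ t) ≤ h s + h t) {x y : α} (hyx : y ≤ x) (s : α) :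
    h (x ⊔ s) - h x ≤ h (y ⊔ s) - h y := by
  have hunion : x ⊔ (y ⊔ s) = x ⊔ s := by rw [← sup_assoc, sup_eq_left.mpr hyx]
  have hinter : h y ≤ h (x ⊓ (y ⊔ s)) := hmono (le_inf hyx le_sup_left)
  have := hsub x (y ⊔ s)
  rw [hunion] at this
  linarith

open Finset

section

variable {N : Type*} [DecidableEq N]

theorem ingJ_canonical_eq (h : Finset N → ℝ) (a1 a2 a3 a4 : Finset N) :
    let d1 := a1 \ (a2 ∪ a3 ∪ a4)
    let d2 := a2 \ (a1 ∪ a3 ∪ a4)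
    let d3 := a3 \ (a1 ∪ a2 ∪ a4)
    let d4 := a4 \ (a1 ∪ a2 ∪ a3)
    let b := (a1 \ d1) ∪ (a2 \ d2) ∪ (a3 \ d3) ∪ (a4 \ d4)
    IngJ h (d1 ∪ b) (d2 ∪ b) (d3 ∪ b) (d4 ∪ b) =
      h (a1 ∪ a2 ∪ a3 ∩ a4) + h (a1 ∪ a3 ∪ a2 ∩ a4) + h (a1 ∪ a4 ∪ a2 ∩ a3)
        + h (a2 ∪ a3 ∪ a1 ∩ a4) + h (a2 ∪ a4 ∪ a1 ∩ a3)
        - h (a1 ∪ a2 ∩ a3 ∪ a2 ∩ a4 ∪ a3 ∩ a4) - h (a2 ∪ a1 ∩ a4 ∪ a1 ∩ a3 ∪ a3 ∩ a4)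
        - h (a3 ∪ a4 ∪ a1 ∩ a2) - h (a1 ∪ a2 ∪ a3) - h (a1 ∪ a2 ∪ a4) := by
  intro d1 d2 d3 d4 b
  obtain ⟨e12, e13, e14, e23, e24, e34, e1, e2, e123, e124⟩ :
      d1 ∪ b ∪ (d2 ∪ b) = a1 ∪ a2 ∪ a3 ∩ a4 ∧ d1 ∪ b ∪ (d3 ∪ b) = a1 ∪ a3 ∪ a2 ∩ a4 ∧
      d1 ∪ b ∪ (d4 ∪ b) = a1 ∪ a4 ∪ a2 ∩ a3 ∧ d2 ∪ b ∪ (d3 ∪ b) = a2 ∪ a3 ∪ a1 ∩ a4 ∧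
      d2 ∪ b ∪ (d4 ∪ b) = a2 ∪ a4 ∪ a1 ∩ a3 ∧ d3 ∪ b ∪ (d4 ∪ b) = a3 ∪ a4 ∪ a1 ∩ a2 ∧
      d1 ∪ b = a1 ∪ a2 ∩ a3 ∪ a2 ∩ a4 ∪ a3 ∩ a4 ∧ d2 ∪ b = a2 ∪ a1 ∩ a4 ∪ a1 ∩ a3 ∪ a3 ∩ a4 ∧
      d1 ∪ b ∪ (d2 ∪ b) ∪ (d3 ∪ b) = a1 ∪ a2 ∪ a3 ∧
      d1 ∪ b ∪ (d2 ∪ b) ∪ (d4 ∪ b) = a1 ∪ a2 ∪ a4 := by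
    refine ⟨?_, ?_, ?_, ?_, ?_, ?_, ?_, ?_, ?_, ?_⟩ <;> ext x <;>
      simp only [d1, d2, d3, d4, b, mem_union, mem_sdiff, mem_inter] <;>
      by_cases x ∈ a1 <;> by_cases x ∈ a2 <;> by_cases x ∈ a3 <;> by_cases x ∈ a4 <;> simp [*]
  rw [IngJ, e123, e124, e12, e13, e14, e23, e24, e34, e1, e2]

theorem canonical_expansion_le_ingJ (h : Finset N → ℝ) (hmono : Monotone h)
    (hsub : ∀ s t : Finset N, h (s ∪ t) + h (s ∩ t) ≤ h s + h t) (a1 a2 a3 a4 : Finset N) :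
    h (a1 ∪ a2 ∪ a3 ∩ a4) + h (a1 ∪ a3 ∪ a2 ∩ a4) + h (a1 ∪ a4 ∪ a2 ∩ a3)
        + h (a2 ∪ a3 ∪ a1 ∩ a4) + h (a2 ∪ a4 ∪ a1 ∩ a3)
        - h (a1 ∪ a2 ∩ a3 ∪ a2 ∩ a4 ∪ a3 ∩ a4) - h (a2 ∪ a1 ∩ a4 ∪ a1 ∩ a3 ∪ a3 ∩ a4)
        - h (a3 ∪ a4 ∪ a1 ∩ a2) - h (a1 ∪ a2 ∪ a3) - h (a1 ∪ a2 ∪ a4)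
      ≤ IngJ h a1 a2 a3 a4 := by
  have i1 : h (a1 ∪ a4 ∪ a2 ∩ a3) - h (a1 ∪ a4) ≤ h (a1 ∪ a2 ∩ a3) - h a1 :=
    marginal_gain_antitone hmono hsub (by grind) _
  have i2 : h (a1 ∪ a3 ∪ a2 ∩ a4) - h (a1 ∪ a3)
      ≤ h (a1 ∪ a2 ∩ a3 ∪ a2 ∩ a4) - h (a1 ∪ a2 ∩ a3) :=
    marginal_gain_antitone hmono hsub (by grind) _
  have i3 : h (a1 ∪ a2 ∪ a3 ∩ a4) - h (a1 ∪ a2)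
      ≤ h (a1 ∪ a2 ∩ a3 ∪ a2 ∩ a4 ∪ a3 ∩ a4) - h (a1 ∪ a2 ∩ a3 ∪ a2 ∩ a4) :=
    marginal_gain_antitone hmono hsub (by grind) _
  have j1 : h (a2 ∪ a3 ∪ a1 ∩ a4) - h (a2 ∪ a3) ≤ h (a2 ∪ a1 ∩ a4) - h a2 :=
    marginal_gain_antitone hmono hsub (by grind) _
  have j2 : h (a2 ∪ a4 ∪ a1 ∩ a3) - h (a2 ∪ a4)
      ≤ h (a2 ∪ a1 ∩ a4 ∪ a1 ∩ a3) - h (a2 ∪ a1 ∩ a4) :=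
    marginal_gain_antitone hmono hsub (by grind) _
  have j3 : h (a2 ∪ a1 ∩ a4 ∪ a1 ∩ a3) ≤ h (a2 ∪ a1 ∩ a4 ∪ a1 ∩ a3 ∪ a3 ∩ a4) :=
    hmono subset_union_left
  have k : h (a3 ∪ a4) ≤ h (a3 ∪ a4 ∪ a1 ∩ a2) := hmono subset_union_left
  unfold IngJ
  linarith

end

theorem ingleton_reduce_to_canonical_general {N : Type*} [DecidableEq N]
    (h : Finset N → ℝ)
    (hmono : ∀ ⦃s t : Finset N⦄, s ⊆ t → h s ≤ h t)
    (hsub : ∀ s t : Finset N, h (s ∪ t) + h (s ∩ t) ≤ h s + h t)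
    (a1 a2 a3 a4 : Finset N) :
    let d1 := a1 \ (a2 ∪ a3 ∪ a4)
    let d2 := a2 \ (a1 ∪ a3 ∪ a4)
    let d3 := a3 \ (a1 ∪ a2 ∪ a4)
    let d4 := a4 \ (a1 ∪ a2 ∪ a3)
    let b := (a1 \ d1) ∪ (a2 \ d2) ∪ (a3 \ d3) ∪ (a4 \ d4)
    IngJ h (d1 ∪ b) (d2 ∪ b) (d3 ∪ b) (d4 ∪ b) ≤ IngJ h a1 a2 a3 a4 :=
  (ingJ_canonical_eq h a1 a2 a3 a4).trans_le
    (canonical_expansion_le_ingJ h hmono hsub a1 a2 a3 a4)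

theorem ingleton_reduce_to_canonical {N : Type*} [DecidableEq N] [Fintype N]
    (h : Finset N → ℝ) (h0 : h ∅ = 0)
    (hmono : ∀ ⦃s t : Finset N⦄, s ⊆ t → h s ≤ h t)
    (hsub : ∀ s t : Finset N, h (s ∪ t) + h (s ∩ t) ≤ h s + h t)
    (a1 a2 a3 a4 : Finset N) :
    let d1 := a1 \ (a2 ∪ a3 ∪ a4)
    let d2 := a2 \ (a1 ∪ a3 ∪ a4)
    let d3 := a3 \ (a1 ∪ a2 ∪ a4)
    let d4 := a4 \ (a1 ∪ a2 ∪ a3)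
    let b := (a1 \ d1) ∪ (a2 \ d2) ∪ (a3 \ d3) ∪ (a4 \ d4)
    IngJ h (d1 ∪ b) (d2 ∪ b) (d3 ∪ b) (d4 ∪ b) ≤ IngJ h a1 a2 a3 a4 :=
  ingleton_reduce_to_canonical_general h hmono hsub a1 a2 a3 a4
end

section
/- The set function h*(α) := 2^n (1 − 2^{−|α|}) on subsets of an n-element set N satisfies J(h*; α₁, α₂, α₃, α₄) > 0 for every choice of subsets α₁, α₂, α₃, α₄ of N for which the Ingleton term is not identically zero (i.e., for which there exists some set function g with J(g; α₁, α₂, α₃, α₄) ≠ 0). -/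
namespace IngJ

variable {N : Type*} [DecidableEq N]

lemma comm_left (g : Finset N → ℝ) (a b c d : Finset N) : IngJ g a b c d = IngJ g b a c d := by
  simp only [IngJ, Finset.union_comm b a]; ring

lemma comm_right (g : Finset N → ℝ) (a b c d : Finset N) : IngJ g a b c d = IngJ g a b d c := by
  simp only [IngJ, Finset.union_comm d c]; ring

lemma sum_apply {ι : Type*} (s : Finset ι) (g : ι → Finset N → ℝ) (a b c d : Finset N) :
    IngJ (fun α => ∑ i ∈ s, g i α) a b c d = ∑ i ∈ s, IngJ (g i) a b c d := by
  simp only [IngJ, Finset.sum_add_distrib, Finset.sum_sub_distrib]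

lemma eq_zero_of_subset (g : Finset N → ℝ) {a b c d : Finset N}
    (hcd : a ⊆ c ∪ d ∨ b ⊆ c ∪ d) (ha : c ⊆ a ∨ d ⊆ a) (hb : c ⊆ b ∨ d ⊆ b) :
    IngJ g a b c d = 0 := by
  wlog hacd : a ⊆ c ∪ d generalizing a b
  · rw [comm_left]
    exact this hcd.symm hb ha (hcd.resolve_left hacd)
  wlog hca : c ⊆ a generalizing c d
  · rw [comm_right]
    exact this (by rwa [Finset.union_comm]) ha.symm hb.symm (by rwa [Finset.union_comm])
      (ha.resolve_left hca)
  rcases hb with hcb | hdb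
  · have hac : a ∪ c = a := by grind
    have hbc : b ∪ c = b := by grind
    have had : a ∪ d = c ∪ d := by grind
    have habc : a ∪ b ∪ c = a ∪ b := by grind
    have habd : a ∪ b ∪ d = b ∪ d := by grind
    simp only [IngJ, hac, hbc, had, habc, habd]; ring
  · have hac : a ∪ c = a := by grind
    have hbd : b ∪ d = b := by grind
    have had : a ∪ d = c ∪ d := by grind
    have hbc : b ∪ c = a ∪ b := by grind
    have habc : a ∪ b ∪ c = a ∪ b := by grind
    have habd : a ∪ b ∪ d = a ∪ b := by grind
    simp only [IngJ, hac, hbd, had, hbc, habc, habd]; ring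

end IngJ

section Hitting

open Finset

variable {N : Type*} [DecidableEq N]

noncomputable def hitting (S α : Finset N) : ℝ := if Disjoint S α then 0 else 1

lemma IngJ_hitting_nonneg (S a b c d : Finset N) : 0 ≤ IngJ (hitting S) a b c d := by
  by_cases ha : Disjoint S a <;> by_cases hb : Disjoint S b <;> by_cases hc : Disjoint S c <;>
    by_cases hd : Disjoint S d <;> simp [IngJ, hitting, ha, hb, hc, hd]

lemma IngJ_hitting_pos_of_disjoint_right {S a b c d : Finset N} (ha : ¬Disjoint S a)
    (hb : ¬Disjoint S b) (hc : Disjoint S c) (hd : Disjoint S d) :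
    0 < IngJ (hitting S) a b c d := by
  simp [IngJ, hitting, ha, hb, hc, hd]

lemma IngJ_hitting_pos_of_disjoint_left {S a b c d : Finset N} (ha : Disjoint S a)
    (hc : ¬Disjoint S c) (hd : ¬Disjoint S d) :
    0 < IngJ (hitting S) a b c d := by
  by_cases hb : Disjoint S b <;> simp [IngJ, hitting, ha, hb, hc, hd]

lemma exists_IngJ_hitting_pos {a b c d : Finset N}
    (h : ¬((a ⊆ c ∪ d ∨ b ⊆ c ∪ d) ∧ (c ⊆ a ∨ d ⊆ a) ∧ (c ⊆ b ∨ d ⊆ b))) :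
    ∃ S, 0 < IngJ (hitting S) a b c d := by
  simp only [not_and_or, not_or, not_subset] at h
  rcases h with ⟨⟨i, hia, hicd⟩, ⟨j, hjb, hjcd⟩⟩ | ⟨⟨i, hic, hia⟩, ⟨j, hjd, hja⟩⟩ |
    ⟨⟨i, hic, hib⟩, ⟨j, hjd, hjb⟩⟩
  · refine ⟨{i, j}, IngJ_hitting_pos_of_disjoint_right ?_ ?_ ?_ ?_⟩ <;>
      simp_all [disjoint_insert_left]
  · refine ⟨{i, j}, IngJ_hitting_pos_of_disjoint_left ?_ ?_ ?_⟩ <;>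
      simp_all [disjoint_insert_left]
  · refine ⟨{i, j}, IngJ.comm_left (hitting _) b a c d ▸
      IngJ_hitting_pos_of_disjoint_left ?_ ?_ ?_⟩ <;> simp_all [disjoint_insert_left]

variable [Fintype N]

lemma card_filter_disjoint (α : Finset N) :
    #{S : Finset N | Disjoint S α} = 2 ^ (Fintype.card N - #α) := by
  have : ({S | Disjoint S α} : Finset (Finset N)) = αᶜ.powerset := by
    ext S; simp [subset_compl_iff_disjoint_right]
  rw [this, card_powerset, card_compl]

lemma sum_hitting (α : Finset N) :
    ∑ S : Finset N, hitting S α = 2 ^ Fintype.card N * (1 - 2⁻¹ ^ #α) := by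
  have hsplit : ∀ S, hitting S α = 1 - if Disjoint S α then 1 else 0 := fun S => by
    unfold hitting; split_ifs <;> norm_num
  simp only [hsplit, sum_sub_distrib, sum_const, card_univ, Fintype.card_finset, sum_boole,
    card_filter_disjoint]
  push_cast
  rw [pow_sub₀ _ two_ne_zero (card_le_univ α), inv_pow]
  ring

end Hitting

theorem ingleton_strict_pos_of_nontrivial {N : Type*} [DecidableEq N] [Fintype N]
    (a1 a2 a3 a4 : Finset N)
    (hnt : ∃ g : Finset N → ℝ, g ∅ = 0 ∧ IngJ g a1 a2 a3 a4 ≠ 0) :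
    0 < IngJ (fun α => (2 : ℝ) ^ (Fintype.card N) * (1 - (2 : ℝ)⁻¹ ^ α.card)) a1 a2 a3 a4 := by
  obtain ⟨g, -, hg⟩ := hnt
  obtain ⟨S, hS⟩ := exists_IngJ_hitting_pos fun h ↦
    hg (IngJ.eq_zero_of_subset g h.1 h.2.1 h.2.2)
  rw [← funext sum_hitting, IngJ.sum_apply]
  exact hS.trans_le <| Finset.single_le_sum (fun T _ ↦ IngJ_hitting_nonneg T a1 a2 a3 a4)
    (Finset.mem_univ S)
end

section
/- Let δ₁, δ₂, δ₃, δ₄, β be pairwise disjoint subsets of N. Then J(h; δ₁∪β, δ₂∪β, δ₃∪β, δ₄∪β) = 0 for all set functions h (with h(∅)=0) if and only if (δ₁ = ∅ or δ₂ = ∅) and (δ₃ = ∅ or δ₄ = ∅). -/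
open Finset

section

variable {N : Type*} [DecidableEq N]

theorem IngJ_comm_left (h : Finset N → ℝ) (a b c d : Finset N) :
    IngJ h a b c d = IngJ h b a c d := by
  simp only [IngJ, union_comm a b]
  ring

theorem IngJ_comm_right (h : Finset N → ℝ) (a b c d : Finset N) :
    IngJ h a b c d = IngJ h a b d c := by
  simp only [IngJ, union_comm c d]
  ring

theorem IngJ_self_left_of_subset (h : Finset N → ℝ) {b c d : Finset N} (hcb : c ⊆ b)
    (hcd : c ⊆ d) : IngJ h c b c d = 0 := by
  simp only [IngJ, union_self, union_eq_right.2 hcb, union_eq_left.2 hcb, union_eq_right.2 hcd]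
  ring

theorem IngJ_union_eq_zero (h : Finset N → ℝ) {d1 d2 d3 d4 : Finset N} (b : Finset N)
    (h12 : d1 = ∅ ∨ d2 = ∅) (h34 : d3 = ∅ ∨ d4 = ∅) :
    IngJ h (d1 ∪ b) (d2 ∪ b) (d3 ∪ b) (d4 ∪ b) = 0 := by
  have hsub : ∀ d : Finset N, b ⊆ d ∪ b := fun d => subset_union_right
  rcases h12 with rfl | rfl <;> rcases h34 with rfl | rfl <;> simp only [empty_union]
  · exact IngJ_self_left_of_subset h (hsub _) (hsub _)
  · rw [IngJ_comm_right]
    exact IngJ_self_left_of_subset h (hsub _) (hsub _)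
  · rw [IngJ_comm_left]
    exact IngJ_self_left_of_subset h (hsub _) (hsub _)
  · rw [IngJ_comm_left, IngJ_comm_right]
    exact IngJ_self_left_of_subset h (hsub _) (hsub _)

def pairIndicator (x y : N) (S : Finset N) : ℝ := if x ∈ S ∧ y ∈ S then 1 else 0

theorem pairIndicator_empty (x y : N) : pairIndicator x y ∅ = 0 := by
  simp [pairIndicator]

theorem IngJ_pairIndicator_of_mem_left {x y : N} {a b c d : Finset N}
    (hx : x ∈ a \ (b ∪ c ∪ d)) (hy : y ∈ b \ (a ∪ c ∪ d)) :
    IngJ (pairIndicator x y) a b c d = -1 := by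
  simp only [mem_sdiff, mem_union, not_or] at hx hy
  simp [IngJ, pairIndicator, hx, hy]

theorem IngJ_pairIndicator_of_mem_right {x y : N} {a b c d : Finset N}
    (hx : x ∈ c \ (a ∪ b ∪ d)) (hy : y ∈ d \ (a ∪ b ∪ c)) :
    IngJ (pairIndicator x y) a b c d = -1 := by
  simp only [mem_sdiff, mem_union, not_or] at hx hy
  simp [IngJ, pairIndicator, hx, hy]

end

theorem ingleton_identically_zero_iff_general {N : Type*} [DecidableEq N]
    (d1 d2 d3 d4 b : Finset N)
    (h12 : Disjoint d1 d2) (h13 : Disjoint d1 d3) (h14 : Disjoint d1 d4)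
    (h23 : Disjoint d2 d3) (h24 : Disjoint d2 d4) (h34 : Disjoint d3 d4)
    (h1b : Disjoint d1 b) (h2b : Disjoint d2 b) (h3b : Disjoint d3 b) (h4b : Disjoint d4 b) :
    (∀ h : Finset N → ℝ, h ∅ = 0 → IngJ h (d1 ∪ b) (d2 ∪ b) (d3 ∪ b) (d4 ∪ b) = 0) ↔
      ((d1 = ∅ ∨ d2 = ∅) ∧ (d3 = ∅ ∨ d4 = ∅)) := by
  refine ⟨fun H => ⟨?_, ?_⟩, fun ⟨hd12, hd34⟩ h _ => IngJ_union_eq_zero h b hd12 hd34⟩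
  all_goals
    by_contra! hne
    obtain ⟨⟨x, hx⟩, ⟨y, hy⟩⟩ := hne
    have := H (pairIndicator x y) (pairIndicator_empty x y)
  · rw [IngJ_pairIndicator_of_mem_left (by grind [disjoint_left])
      (by grind [disjoint_left])] at this
    norm_num at this
  · rw [IngJ_pairIndicator_of_mem_right (by grind [disjoint_left])
      (by grind [disjoint_left])] at this
    norm_num at this

theorem ingleton_identically_zero_iff {N : Type*} [DecidableEq N] [Fintype N]
    (d1 d2 d3 d4 b : Finset N)
    (h12 : Disjoint d1 d2) (h13 : Disjoint d1 d3) (h14 : Disjoint d1 d4)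
    (h23 : Disjoint d2 d3) (h24 : Disjoint d2 d4) (h34 : Disjoint d3 d4)
    (h1b : Disjoint d1 b) (h2b : Disjoint d2 b) (h3b : Disjoint d3 b) (h4b : Disjoint d4 b) :
    (∀ h : Finset N → ℝ, h ∅ = 0 → IngJ h (d1 ∪ b) (d2 ∪ b) (d3 ∪ b) (d4 ∪ b) = 0) ↔
      ((d1 = ∅ ∨ d2 = ∅) ∧ (d3 = ∅ ∨ d4 = ∅)) :=
  ingleton_identically_zero_iff_general d1 d2 d3 d4 b h12 h13 h14 h23 h24 h34 h1b h2b h3b h4b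
end

section
/- Suppose c_i ≥ 0 for all i in a finite index set I, and suppose that for all set functions h on subsets of N, ∑_{i∈I} c_i · J(h; α₁ⁱ, α₂ⁱ, α₃ⁱ, α₄ⁱ) = 0, where each quadruple (α₁ⁱ, α₂ⁱ, α₃ⁱ, α₄ⁱ) yields a nontrivial Ingleton term (not identically zero as a function of h). Then c_i = 0 for all i ∈ I. -/
/-!
The indicator `meets S` of meeting `S` satisfies the Ingleton inequality (a four-variable case
check), and together with the constants these functions span all set functions. Hence a nontrivial
Ingleton term is positive on some `meets S`, and so on their sum `meetCount α = 2ⁿ - 2ⁿ⁻ᵏ`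
(`k = |α|`), which is the function `h*` of the hint. Evaluating the vanishing combination at
`meetCount` gives a sum of nonnegative terms `c i · J(meetCount)` with `J(meetCount) > 0`.
-/

section

open Finset

variable {N : Type*} [DecidableEq N]

namespace IngJ

variable {a b c d : Finset N}

theorem sum_fn {ι : Type*} (s : Finset ι) (f : ι → Finset N → ℝ) :
    IngJ (fun α => ∑ i ∈ s, f i α) a b c d = ∑ i ∈ s, IngJ (f i) a b c d := by
  simp only [IngJ, sum_add_distrib, sum_sub_distrib]

theorem const_mul (r : ℝ) (f : Finset N → ℝ) :
    IngJ (fun α => r * f α) a b c d = r * IngJ f a b c d := by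
  simp only [IngJ]; ring

theorem one_sub (f : Finset N → ℝ) :
    IngJ (fun α => 1 - f α) a b c d = -IngJ f a b c d := by
  simp only [IngJ]; ring

end IngJ

def meets (S α : Finset N) : ℝ := if Disjoint S α then 0 else 1

theorem IngJ_meets_nonneg (S a b c d : Finset N) : 0 ≤ IngJ (meets S) a b c d := by
  simp only [IngJ, meets, disjoint_union_right]
  by_cases Disjoint S a <;> by_cases Disjoint S b <;> by_cases Disjoint S c <;>
    by_cases Disjoint S d <;> simp [*]

theorem sum_powerset_neg_one_pow_mul_one_sub_meets [Fintype N] (α β : Finset N) :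
    ∑ S ∈ β.powerset, (-1 : ℝ) ^ #S * (1 - meets (S ∪ βᶜ) α) = if α = β then 1 else 0 := by
  have hmiss : ∀ S, 1 - meets (S ∪ βᶜ) α = if Disjoint S α ∧ α ⊆ β then 1 else 0 := by
    intro S
    simp only [meets, disjoint_union_left, disjoint_compl_left_iff]
    split_ifs <;> norm_num
  simp only [hmiss, mul_ite, mul_one, mul_zero]
  by_cases hαβ : α ⊆ β
  · have hfilter : {S ∈ β.powerset | Disjoint S α} = (β \ α).powerset := by
      ext S; simp [subset_sdiff]
    have hsum : ∑ S ∈ (β \ α).powerset, (-1 : ℝ) ^ #S = if β ⊆ α then 1 else 0 := by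
      simpa [sdiff_eq_empty_iff_subset] using
        congrArg (Int.cast : ℤ → ℝ) (sum_powerset_neg_one_pow_card (x := β \ α))
    simp only [hαβ, and_true, ← sum_filter, hfilter, hsum, subset_antisymm_iff, true_and]
  · have hne : α ≠ β := fun h => hαβ h.subset
    simp [hαβ, hne]

theorem IngJ_eq_zero_of_forall_meets [Fintype N] {a b c d : Finset N}
    (h : ∀ S, IngJ (meets S) a b c d = 0) (g : Finset N → ℝ) : IngJ g a b c d = 0 := by
  -- `g` is a combination of point masses, and the point mass at `β` is the alternating sum above.
  have hg : g = fun α => ∑ β, g β * ∑ S ∈ β.powerset, (-1 : ℝ) ^ #S * (1 - meets (S ∪ βᶜ) α) := by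
    funext α
    simp [sum_powerset_neg_one_pow_mul_one_sub_meets]
  rw [hg, IngJ.sum_fn]
  refine sum_eq_zero fun β _ => ?_
  simp only [IngJ.const_mul, IngJ.sum_fn, IngJ.one_sub, h, neg_zero, mul_zero, sum_const_zero]

def meetCount [Fintype N] (α : Finset N) : ℝ := ∑ S, meets S α

theorem meetCount_empty [Fintype N] : meetCount (∅ : Finset N) = 0 := by
  simp [meetCount, meets]

theorem IngJ_meetCount_nonneg [Fintype N] (a b c d : Finset N) :
    0 ≤ IngJ meetCount a b c d := by
  unfold meetCount
  rw [IngJ.sum_fn]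
  exact sum_nonneg fun S _ => IngJ_meets_nonneg S a b c d

theorem IngJ_meetCount_pos [Fintype N] {a b c d : Finset N}
    (hJ : ∃ g : Finset N → ℝ, IngJ g a b c d ≠ 0) :
    0 < IngJ meetCount a b c d := by
  obtain ⟨g, hg⟩ := hJ
  obtain ⟨S, hS⟩ : ∃ S, IngJ (meets S) a b c d ≠ 0 := by
    by_contra! hall
    exact hg (IngJ_eq_zero_of_forall_meets hall g)
  unfold meetCount
  rw [IngJ.sum_fn]
  exact sum_pos' (fun T _ => IngJ_meets_nonneg T a b c d)
    ⟨S, mem_univ S, (IngJ_meets_nonneg S a b c d).lt_of_ne' hS⟩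

end

theorem ingleton_nonneg_comb_zero {N : Type*} [DecidableEq N] [Fintype N]
    {ι : Type*} (I : Finset ι) (c : ι → ℝ)
    (A1 A2 A3 A4 : ι → Finset N)
    (hc : ∀ i ∈ I, 0 ≤ c i)
    (hnt : ∀ i ∈ I, ∃ g : Finset N → ℝ, g ∅ = 0 ∧ IngJ g (A1 i) (A2 i) (A3 i) (A4 i) ≠ 0)
    (hzero : ∀ h : Finset N → ℝ, h ∅ = 0 →
      ∑ i ∈ I, c i * IngJ h (A1 i) (A2 i) (A3 i) (A4 i) = 0) :
    ∀ i ∈ I, c i = 0 := by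
  intro i hi
  have hterm := (Finset.sum_eq_zero_iff_of_nonneg fun j hj =>
    mul_nonneg (hc j hj) (IngJ_meetCount_nonneg _ _ _ _)).mp (hzero meetCount meetCount_empty) i hi
  obtain ⟨g, -, hg⟩ := hnt i hi
  exact (mul_eq_zero.mp hterm).resolve_right (IngJ_meetCount_pos ⟨g, hg⟩).ne'
end
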